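/- Soundness of the ReLo axiomatic system: every formula derivable from the axioms (propositional tautologies, K, And, Du, R — the latter under its side condition f_ReLo(t,π) = ε —, It, Ind) using modus ponens and generalization is valid in the class of ReLo models where R_{π*} is the reflexive–transitive closure of R_π and the relation corresponding to a modality with side condition f_ReLo(t,π)=ε is the identity. -/
import Mathlib


/-- Formulas of ReLo: atomic propositions, negation, conjunction, implication,
and modalities ⟨t,π⟩φ (`dia`) and ⟨t,π*⟩φ (`diaStar`), with data-flow labels `t`
and atomic programs `π` coded as naturals. -/
inductive F : Type
  | atom : ℕ → F
  | neg : F → F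
  | and : F → F → F
  | imp : F → F → F
  | dia : ℕ → ℕ → F → F
  | diaStar : ℕ → ℕ → F → F
deriving DecidableEq

/-- A (Kripke-style) ReLo model: a relation `R π` for each atomic program `π`
and a valuation `V`. -/
structure Model (W : Type) where
  R : ℕ → W → W → Prop
  V : W → ℕ → Prop

/-- Satisfaction: standard Kripke semantics; `⟨t,π*⟩` is interpreted by the
reflexive–transitive closure of `R π`. -/
def sat {W : Type} (M : Model W) : W → F → Prop
  | w, .atom p => M.V w p
  | w, .neg φ => ¬ sat M w φ
  | w, .and φ ψ => sat M w φ ∧ sat M w ψ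
  | w, .imp φ ψ => sat M w φ → sat M w ψ
  | w, .dia _ π φ => ∃ v, M.R π w v ∧ sat M v φ
  | w, .diaStar _ π φ => ∃ v, Relation.ReflTransGen (M.R π) w v ∧ sat M v φ

/-- `[t,π]φ ≡ ¬⟨t,π⟩¬φ`. -/
def F.box (t π : ℕ) (φ : F) : F := .neg (.dia t π (.neg φ))

/-- `[t,π*]φ ≡ ¬⟨t,π*⟩¬φ`. -/
def F.boxStar (t π : ℕ) (φ : F) : F := .neg (.diaStar t π (.neg φ))

/-- `φ ↔ ψ` as a formula. -/
def F.iff (φ ψ : F) : F := (φ.imp ψ).and (ψ.imp φ)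

/-- Boolean evaluation treating atoms and modal formulas as propositional atoms;
used to express "propositional tautology". -/
def beval (v : F → Prop) : F → Prop
  | .neg φ => ¬ beval v φ
  | .and φ ψ => beval v φ ∧ beval v ψ
  | .imp φ ψ => beval v φ → beval v ψ
  | φ => v φ

/-- Derivability in the ReLo axiomatic system. `E` is the set of pairs `(t,π)`
satisfying the side condition `f_ReLo(t,π) = ε` of axiom (R). -/
inductive Deriv (E : Set (ℕ × ℕ)) : F → Prop
  | taut {φ : F} : (∀ v : F → Prop, beval v φ) → Deriv E φ
  | axK (t π : ℕ) (φ ψ : F) :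
      Deriv E ((F.box t π (φ.imp ψ)).imp ((F.box t π φ).imp (F.box t π ψ)))
  | axAnd (t π : ℕ) (φ ψ : F) :
      Deriv E ((F.box t π (φ.and ψ)).iff ((F.box t π φ).and (F.box t π ψ)))
  | axDu (t π : ℕ) (φ : F) :
      Deriv E ((F.box t π φ).iff (F.neg (F.dia t π (F.neg φ))))
  | axR (t π : ℕ) (φ : F) (h : (t, π) ∈ E) :
      Deriv E ((F.dia t π φ).iff φ)
  | axIt (t t' π : ℕ) (φ : F) :
      Deriv E ((φ.and (F.box t π (F.boxStar t' π φ))).iff (F.boxStar t π φ))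
  | axInd (t t' π : ℕ) (φ : F) :
      Deriv E ((φ.and (F.boxStar t π (φ.imp (F.box t' π φ)))).imp (F.boxStar t π φ))
  | mp {φ ψ : F} : Deriv E (φ.imp ψ) → Deriv E φ → Deriv E ψ
  | gen {φ : F} (t π : ℕ) : Deriv E φ → Deriv E (F.box t π φ)

/-- The class of models in which, whenever the side condition of axiom (R)
holds for `(t,π)`, the relation `R π` is the identity. -/
def GoodModel {W : Type} (E : Set (ℕ × ℕ)) (M : Model W) : Prop :=
  ∀ t π : ℕ, (t, π) ∈ E → ∀ u v : W, M.R π u v ↔ u = v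

lemma sat_imp {W : Type} (M : Model W) (w : W) (φ ψ : F) :
    sat M w (φ.imp ψ) ↔ (sat M w φ → sat M w ψ) := Iff.rfl

lemma sat_and {W : Type} (M : Model W) (w : W) (φ ψ : F) :
    sat M w (φ.and ψ) ↔ (sat M w φ ∧ sat M w ψ) := Iff.rfl

lemma sat_neg {W : Type} (M : Model W) (w : W) (φ : F) :
    sat M w (φ.neg) ↔ ¬ sat M w φ := Iff.rfl

lemma sat_dia {W : Type} (M : Model W) (w : W) (t π : ℕ) (φ : F) :
    sat M w (F.dia t π φ) ↔ ∃ v, M.R π w v ∧ sat M v φ := Iff.rfl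

lemma sat_box {W : Type} (M : Model W) (w : W) (t π : ℕ) (φ : F) :
    sat M w (F.box t π φ) ↔ ∀ v, M.R π w v → sat M v φ := by
  simp [F.box, sat]

lemma sat_boxStar {W : Type} (M : Model W) (w : W) (t π : ℕ) (φ : F) :
    sat M w (F.boxStar t π φ) ↔ ∀ v, Relation.ReflTransGen (M.R π) w v → sat M v φ := by
  simp [F.boxStar, sat]

lemma sat_beval {W : Type} (M : Model W) (w : W) (φ : F) :
    beval (sat M w) φ ↔ sat M w φ := by
  induction φ with
  | atom p => rfl
  | neg φ ih => simp [beval, sat, ih]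
  | and φ ψ ih1 ih2 => simp [beval, sat, ih1, ih2]
  | imp φ ψ ih1 ih2 => simp [beval, sat, ih1, ih2]
  | dia t π φ _ => rfl
  | diaStar t π φ _ => rfl

theorem relo_soundness (E : Set (ℕ × ℕ)) (φ : F) (h : Deriv E φ) :
    ∀ (W : Type) (M : Model W), GoodModel E M → ∀ s : W, sat M s φ := by
  induction h with
  | @taut φ hv =>
    intro W M _ s
    exact (sat_beval M s φ).mp (hv (sat M s))
  | axK t π φ ψ =>
    intro W M _ s
    simp only [sat_imp, sat_box]
    intro h1 h2 v hv
    exact h1 v hv (h2 v hv)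
  | axAnd t π φ ψ =>
    intro W M _ s
    simp only [F.iff, sat_imp, sat_and, sat_box]
    constructor
    · intro h; exact ⟨fun v hv => (h v hv).1, fun v hv => (h v hv).2⟩
    · intro h v hv; exact ⟨h.1 v hv, h.2 v hv⟩
  | axDu t π φ =>
    intro W M _ s
    simp only [F.iff, F.box, sat_imp]
    exact ⟨fun h => h, fun h => h⟩
  | axR t π φ hE =>
    intro W M hM s
    simp only [F.iff, sat_imp, sat_dia]
    constructor
    · rintro ⟨v, hr, hs⟩
      rw [(hM t π hE s v).mp hr]; exact hs
    · intro h
      exact ⟨s, (hM t π hE s s).mpr rfl, h⟩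
  | axIt t t' π φ =>
    intro W M _ s
    simp only [F.iff, sat_imp, sat_and, sat_box, sat_boxStar]
    constructor
    · rintro ⟨h0, hstep⟩ v hv
      induction hv using Relation.ReflTransGen.head_induction_on with
      | refl => exact h0
      | head hr htr _ =>
        exact hstep _ hr _ htr
    · intro h
      exact ⟨h s Relation.ReflTransGen.refl,
        fun v hv u hu => h u (Relation.ReflTransGen.head hv hu)⟩
  | axInd t t' π φ =>
    intro W M _ s
    simp only [sat_imp, sat_and, sat_box, sat_boxStar]
    rintro ⟨h0, hstep⟩ v hv
    induction hv with
    | refl => exact h0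
    | tail htr hr ih =>
      exact hstep _ htr ih _ hr
  | mp _ _ ih1 ih2 =>
    intro W M hM s
    exact (ih1 W M hM s) (ih2 W M hM s)
  | gen t π _ ih =>
    intro W M hM s
    rw [sat_box]
    intro v _
    exact ih W M hM v
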